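/- arXiv:1611.00261 — 2 statements merged into one kernel-verified Lean document; each statement's English description precedes it below -/
import Mathlib

section
/- Let X_1,…,X_n and Y_1,…,Y_n be random variables on a common probability space, each taking values in a finite set. Writing X^i = (X_1,…,X_i) and Y^i = (Y_1,…,Y_i) (with X^0 and Y^0 empty, so that conditioning on them is vacuous and mutual information with them is 0), the mutual information between the two time series decomposes as I(X^n ; Y^n) = Σ_{i=1}^{n} I(X^{i-1} ; Y_i | Y^{i-1}) + Σ_{i=1}^{n} I(Y^{i-1} ; X_i | X^{i-1}) + Σ_{i=1}^{n} I(X_i ; Y_i | X^{i-1}, Y^{i-1}), i.e. mutual information is the sum of the two delayed directed informations I(X^{n-1} → Y^n), I(Y^{n-1} → X^n) and the instantaneous coupling I(X^n ↔ Y^n). -/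
open MeasureTheory
open scoped ENNReal

/-- Shannon entropy of a random variable with values in a finite set, with respect to the
measure `P`: `H(X) = -∑ₛ P(X = s) log P(X = s)`. -/
noncomputable def entropy {Ω : Type*} [MeasurableSpace Ω] (P : Measure Ω)
    {S : Type*} [Fintype S] (X : Ω → S) : ℝ :=
  - ∑ s : S, (P (X ⁻¹' {s})).toReal * Real.log (P (X ⁻¹' {s})).toReal

/-- Mutual information `I(U;V) = H(U) + H(V) - H(U,V)` of discrete random variables. -/
noncomputable def mutualInfo {Ω : Type*} [MeasurableSpace Ω] (P : Measure Ω)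
    {S T : Type*} [Fintype S] [Fintype T] (U : Ω → S) (V : Ω → T) : ℝ :=
  entropy P U + entropy P V - entropy P (fun ω => (U ω, V ω))

/-- Conditional mutual information
`I(U;V|W) = H(U,W) + H(V,W) - H(U,V,W) - H(W)` of discrete random variables. -/
noncomputable def condMutualInfo {Ω : Type*} [MeasurableSpace Ω] (P : Measure Ω)
    {S T R : Type*} [Fintype S] [Fintype T] [Fintype R]
    (U : Ω → S) (V : Ω → T) (W : Ω → R) : ℝ :=
  entropy P (fun ω => (U ω, W ω)) + entropy P (fun ω => (V ω, W ω))
    - entropy P (fun ω => (U ω, V ω, W ω)) - entropy P W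

/-- The prefix `X^i = (X_1, …, X_i)` (of length `i.val`) of the time series `X_1, …, X_n`,
indexed so that `i : Fin n` represents the paper's index `i = i.val + 1`. -/
def pref {Ω S : Type*} {n : ℕ} (X : Fin n → Ω → S) (i : Fin n) : Ω → Fin i.val → S :=
  fun ω j => X (j.castLE i.isLt.le) ω

namespace AMaux

lemma entropy_comp_inj {Ω : Type*} [MeasurableSpace Ω] (P : Measure Ω)
    {A B : Type*} [Fintype A] [Fintype B] (X : Ω → A) (f : A → B)
    (hf : Function.Injective f) :
    entropy P (fun ω => f (X ω)) = entropy P X := by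
  classical
  unfold entropy
  congr 1
  have hsub : (∑ b : B, (P ((fun ω => f (X ω)) ⁻¹' {b})).toReal *
      Real.log (P ((fun ω => f (X ω)) ⁻¹' {b})).toReal)
      = ∑ b ∈ Finset.univ.image f, (P ((fun ω => f (X ω)) ⁻¹' {b})).toReal *
        Real.log (P ((fun ω => f (X ω)) ⁻¹' {b})).toReal := by
    refine (Finset.sum_subset (Finset.subset_univ _) ?_).symm
    intro b _ hb
    have hemp : (fun ω => f (X ω)) ⁻¹' {b} = ∅ := by
      ext ω
      simp only [Set.mem_preimage, Set.mem_singleton_iff, Set.mem_empty_iff_false, iff_false]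
      intro h
      exact hb (Finset.mem_image.mpr ⟨X ω, Finset.mem_univ _, h⟩)
    simp [hemp]
  rw [hsub, Finset.sum_image (fun a _ b _ h => hf h)]
  refine Finset.sum_congr rfl fun a _ => ?_
  have : (fun ω => f (X ω)) ⁻¹' {f a} = X ⁻¹' {a} := by
    ext ω; simp [hf.eq_iff]
  rw [this]

lemma entropy_subsingleton {Ω : Type*} [MeasurableSpace Ω] (P : Measure Ω)
    [IsProbabilityMeasure P] {A : Type*} [Fintype A] [Subsingleton A] (X : Ω → A) :
    entropy P X = 0 := by
  unfold entropy
  rcases isEmpty_or_nonempty A with h | ⟨⟨a⟩⟩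
  · simp
  · rw [Finset.sum_eq_single a (fun b _ hb => absurd (Subsingleton.elim b a) hb)
      (fun h => absurd (Finset.mem_univ a) h)]
    have : X ⁻¹' {a} = Set.univ := by
      ext ω; simp [Subsingleton.elim (X ω) a]
    simp [this]

/-- The canonical prefix of length `k`. -/
def prefFun {Ω S : Type*} {n : ℕ} (X : Fin n → Ω → S) (k : ℕ) (hk : k ≤ n) :
    Ω → Fin k → S :=
  fun ω j => X (j.castLE hk) ω

/-- `D k = H(X^k) + H(Y^k) - H(X^k, Y^k)`. -/
noncomputable def Dfun {Ω S T : Type*} [MeasurableSpace Ω] (P : Measure Ω)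
    [Fintype S] [Fintype T] {n : ℕ} (X : Fin n → Ω → S) (Y : Fin n → Ω → T)
    (k : ℕ) (hk : k ≤ n) : ℝ :=
  entropy P (prefFun X k hk) + entropy P (prefFun Y k hk)
    - entropy P (fun ω => (prefFun X k hk ω, prefFun Y k hk ω))

section Inj

variable {A B C : Type*} {k : ℕ}

lemma inj1 : Function.Injective
    (fun g : Fin (k+1) → A => (g (Fin.last k), Fin.init g)) :=
  Function.LeftInverse.injective
    (g := fun p : A × (Fin k → A) => Fin.snoc p.2 p.1)
    (fun g => Fin.snoc_init_self g)

lemma inj2 : Function.Injective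
    (fun p : A × (Fin (k+1) → B) => (p.1, (p.2 (Fin.last k), Fin.init p.2))) :=
  Function.LeftInverse.injective
    (g := fun q : A × (B × (Fin k → B)) => (q.1, Fin.snoc q.2.2 q.2.1))
    (fun p => by simp [Fin.snoc_init_self])

lemma inj3 : Function.Injective
    (fun p : (Fin (k+1) → A) × B => (p.2, (p.1 (Fin.last k), Fin.init p.1))) :=
  Function.LeftInverse.injective
    (g := fun q : B × (A × (Fin k → A)) => (Fin.snoc q.2.2 q.2.1, q.1))
    (fun p => by simp [Fin.snoc_init_self])

lemma inj4 : Function.Injective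
    (fun p : (Fin (k+1) → A) × B => (p.1 (Fin.last k), (Fin.init p.1, p.2))) :=
  Function.LeftInverse.injective
    (g := fun q : A × ((Fin k → A) × B) => (Fin.snoc q.2.1 q.1, q.2.2))
    (fun p => by simp [Fin.snoc_init_self])

lemma inj5 : Function.Injective
    (fun p : A × (Fin (k+1) → B) => (p.2 (Fin.last k), (p.1, Fin.init p.2))) :=
  Function.LeftInverse.injective
    (g := fun q : B × (A × (Fin k → B)) => (q.2.1, Fin.snoc q.2.2 q.1))
    (fun p => by simp [Fin.snoc_init_self])

lemma inj6 : Function.Injective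
    (fun p : (Fin (k+1) → A) × (Fin (k+1) → B) =>
      (p.1 (Fin.last k), (p.2 (Fin.last k), (Fin.init p.1, Fin.init p.2)))) :=
  Function.LeftInverse.injective
    (g := fun q : A × (B × ((Fin k → A) × (Fin k → B))) =>
      (Fin.snoc q.2.2.1 q.1, Fin.snoc q.2.2.2 q.2.1))
    (fun p => by simp [Fin.snoc_init_self])

end Inj

variable {Ω S T : Type*} [MeasurableSpace Ω] (P : Measure Ω)
  [Fintype S] [Fintype T] {n : ℕ} (X : Fin n → Ω → S) (Y : Fin n → Ω → T)

set_option maxHeartbeats 1000000 in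
lemma step (i : Fin n) :
    condMutualInfo P (pref X i) (Y i) (pref Y i)
      + condMutualInfo P (pref Y i) (X i) (pref X i)
      + condMutualInfo P (X i) (Y i) (fun ω => (pref X i ω, pref Y i ω))
    = Dfun P X Y (i.val+1) i.isLt - Dfun P X Y i.val i.isLt.le := by
  have ha1 : entropy P (fun ω => (X i ω, pref X i ω))
      = entropy P (prefFun X (i.val+1) i.isLt) :=
    entropy_comp_inj P (prefFun X (i.val+1) i.isLt)
      (fun g => (g (Fin.last i.val), Fin.init g)) inj1
  have ha2 : entropy P (fun ω => (Y i ω, pref Y i ω))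
      = entropy P (prefFun Y (i.val+1) i.isLt) :=
    entropy_comp_inj P (prefFun Y (i.val+1) i.isLt)
      (fun g => (g (Fin.last i.val), Fin.init g)) inj1
  have hb : entropy P (fun ω => (pref Y i ω, pref X i ω))
      = entropy P (fun ω => (pref X i ω, pref Y i ω)) :=
    entropy_comp_inj P (fun ω => (pref X i ω, pref Y i ω)) Prod.swap Prod.swap_injective
  have hc : entropy P (fun ω => (pref X i ω, (Y i ω, pref Y i ω)))
      = entropy P (fun ω => (pref X i ω, prefFun Y (i.val+1) i.isLt ω)) :=
    entropy_comp_inj P (fun ω => (pref X i ω, prefFun Y (i.val+1) i.isLt ω))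
      (fun p => (p.1, (p.2 (Fin.last i.val), Fin.init p.2))) inj2
  have hd : entropy P (fun ω => (pref Y i ω, (X i ω, pref X i ω)))
      = entropy P (fun ω => (prefFun X (i.val+1) i.isLt ω, pref Y i ω)) :=
    entropy_comp_inj P (fun ω => (prefFun X (i.val+1) i.isLt ω, pref Y i ω))
      (fun p => (p.2, (p.1 (Fin.last i.val), Fin.init p.1))) inj3
  have he : entropy P (fun ω => (X i ω, (pref X i ω, pref Y i ω)))
      = entropy P (fun ω => (prefFun X (i.val+1) i.isLt ω, pref Y i ω)) :=
    entropy_comp_inj P (fun ω => (prefFun X (i.val+1) i.isLt ω, pref Y i ω))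
      (fun p => (p.1 (Fin.last i.val), (Fin.init p.1, p.2))) inj4
  have hf' : entropy P (fun ω => (Y i ω, (pref X i ω, pref Y i ω)))
      = entropy P (fun ω => (pref X i ω, prefFun Y (i.val+1) i.isLt ω)) :=
    entropy_comp_inj P (fun ω => (pref X i ω, prefFun Y (i.val+1) i.isLt ω))
      (fun p => (p.2 (Fin.last i.val), (p.1, Fin.init p.2))) inj5
  have hg : entropy P (fun ω => (X i ω, (Y i ω, (pref X i ω, pref Y i ω))))
      = entropy P (fun ω => (prefFun X (i.val+1) i.isLt ω, prefFun Y (i.val+1) i.isLt ω)) :=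
    entropy_comp_inj P
      (fun ω => (prefFun X (i.val+1) i.isLt ω, prefFun Y (i.val+1) i.isLt ω))
      (fun p => (p.1 (Fin.last i.val), (p.2 (Fin.last i.val), (Fin.init p.1, Fin.init p.2)))) inj6
  have hpX : entropy P (prefFun X i.val i.isLt.le) = entropy P (pref X i) := rfl
  have hpY : entropy P (prefFun Y i.val i.isLt.le) = entropy P (pref Y i) := rfl
  have hpXY : entropy P (fun ω => (prefFun X i.val i.isLt.le ω, prefFun Y i.val i.isLt.le ω))
      = entropy P (fun ω => (pref X i ω, pref Y i ω)) := rfl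
  simp only [condMutualInfo, Dfun]
  rw [ha1, ha2, hb, hc, hd, he, hf', hg, hpX, hpY, hpXY]
  ring

end AMaux

/-- **Decomposition of mutual information into directed informations and instantaneous
coupling** (Equation (4) of the paper, the Amblard–Michel decomposition): for time series
`X_1, …, X_n` and `Y_1, …, Y_n` of random variables with values in finite sets,
`I(X^n ; Y^n) = Σᵢ I(X^{i-1} ; Y_i | Y^{i-1}) + Σᵢ I(Y^{i-1} ; X_i | X^{i-1})
  + Σᵢ I(X_i ; Y_i | X^{i-1}, Y^{i-1})`. -/
theorem mutualInfo_eq_directedInfo_add_directedInfo_add_instCoupling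
    {Ω S T : Type*} [MeasurableSpace Ω] (P : Measure Ω) [IsProbabilityMeasure P]
    [Fintype S] [MeasurableSpace S] [MeasurableSingletonClass S]
    [Fintype T] [MeasurableSpace T] [MeasurableSingletonClass T]
    {n : ℕ} (X : Fin n → Ω → S) (Y : Fin n → Ω → T)
    (hX : ∀ i, Measurable (X i)) (hY : ∀ i, Measurable (Y i)) :
    mutualInfo P (fun ω (j : Fin n) => X j ω) (fun ω (j : Fin n) => Y j ω)
      = (∑ i : Fin n, condMutualInfo P (pref X i) (Y i) (pref Y i))
        + (∑ i : Fin n, condMutualInfo P (pref Y i) (X i) (pref X i))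
        + (∑ i : Fin n, condMutualInfo P (X i) (Y i)
            (fun ω => (pref X i ω, pref Y i ω))) := by
  classical
  set g : ℕ → ℝ := fun k => if h : k ≤ n then AMaux.Dfun P X Y k h else 0 with hgdef
  have hstep : ∀ i : Fin n,
      condMutualInfo P (pref X i) (Y i) (pref Y i)
        + condMutualInfo P (pref Y i) (X i) (pref X i)
        + condMutualInfo P (X i) (Y i) (fun ω => (pref X i ω, pref Y i ω))
      = g (i.val + 1) - g i.val := by
    intro i
    rw [hgdef]
    simp only []
    rw [dif_pos (show (i:ℕ)+1 ≤ n from i.isLt), dif_pos i.isLt.le]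
    exact AMaux.step P X Y i
  have hsum : (∑ i : Fin n, condMutualInfo P (pref X i) (Y i) (pref Y i))
        + (∑ i : Fin n, condMutualInfo P (pref Y i) (X i) (pref X i))
        + (∑ i : Fin n, condMutualInfo P (X i) (Y i)
            (fun ω => (pref X i ω, pref Y i ω)))
      = g n - g 0 := by
    rw [← Finset.sum_add_distrib, ← Finset.sum_add_distrib]
    rw [Finset.sum_congr rfl (fun i _ => hstep i)]
    rw [Fin.sum_univ_eq_sum_range (fun k => g (k + 1) - g k) n]
    exact Finset.sum_range_sub g n
  rw [hsum]
  have hg0 : g 0 = 0 := by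
    rw [hgdef]
    simp only [dif_pos (Nat.zero_le n)]
    haveI : Subsingleton (Fin 0 → S) := ⟨fun a b => funext fun j => j.elim0⟩
    haveI : Subsingleton (Fin 0 → T) := ⟨fun a b => funext fun j => j.elim0⟩
    haveI : Subsingleton ((Fin 0 → S) × (Fin 0 → T)) :=
      ⟨fun a b => Prod.ext (Subsingleton.elim _ _) (Subsingleton.elim _ _)⟩
    unfold AMaux.Dfun
    rw [AMaux.entropy_subsingleton, AMaux.entropy_subsingleton, AMaux.entropy_subsingleton]
    ring
  have hgn : g n = mutualInfo P (fun ω (j : Fin n) => X j ω) (fun ω (j : Fin n) => Y j ω) := by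
    rw [hgdef]
    simp only [dif_pos (le_refl n)]
    rfl
  rw [hg0, hgn, sub_zero]
end

section
/- Let X_1,…,X_n and Y_1,…,Y_n be random variables on a common probability space, each taking values in a finite set, and write X^i = (X_1,…,X_i), Y^i = (Y_1,…,Y_i). Then the directed information decomposes into multiinformations: Σ_{i=1}^{n} I(X^i ; Y_i | Y^{i-1}) = Σ_{i=1}^{n} [ M(X^i, Y^i) − M(X^i, Y^{i-1}) ] − M(Y^n), where M(Z_1,…,Z_m) = Σ_{j=1}^{m} H(Z_j) − H(Z_1,…,Z_m) is the multiinformation of the random vector (Z_1,…,Z_m), and conditioning on the empty vector Y^0 is vacuous. -/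
open MeasureTheory
open scoped ENNReal

/-- Multiinformation `M(Z_1, …, Z_m) = Σⱼ H(Z_j) - H(Z_1, …, Z_m)` of a random vector. -/
noncomputable def multiInfo {Ω : Type*} [MeasurableSpace Ω] (P : Measure Ω)
    {T : Type*} [Fintype T] {m : ℕ} (Z : Fin m → Ω → T) : ℝ :=
  (∑ j : Fin m, entropy P (Z j)) - entropy P (fun ω (j : Fin m) => Z j ω)

/-- Multiinformation `M(U_1, …, U_a, V_1, …, V_b)` of the concatenation of two random
vectors: the sum of the marginal entropies minus the joint entropy. -/
noncomputable def multiInfo₂ {Ω : Type*} [MeasurableSpace Ω] (P : Measure Ω)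
    {S T : Type*} [Fintype S] [Fintype T] {a b : ℕ}
    (U : Fin a → Ω → S) (V : Fin b → Ω → T) : ℝ :=
  (∑ j : Fin a, entropy P (U j)) + (∑ j : Fin b, entropy P (V j))
    - entropy P (fun ω => ((fun j : Fin a => U j ω), (fun j : Fin b => V j ω)))

lemma entropy_comp_inj {Ω : Type*} [MeasurableSpace Ω] (P : Measure Ω)
    {S T : Type*} [Fintype S] [Fintype T] (X : Ω → S) (f : S → T)
    (hf : Function.Injective f) :
    entropy P (fun ω => f (X ω)) = entropy P X := by
  classical
  unfold entropy
  congr 1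
  set g : T → ℝ := fun t =>
    (P ((fun ω => f (X ω)) ⁻¹' {t})).toReal *
      Real.log (P ((fun ω => f (X ω)) ⁻¹' {t})).toReal with hg
  have key : ∀ s : S, (fun ω => f (X ω)) ⁻¹' {f s} = X ⁻¹' {s} := by
    intro s; ext ω; simp [hf.eq_iff]
  have h1 : ∑ s : S, (P (X ⁻¹' {s})).toReal * Real.log (P (X ⁻¹' {s})).toReal
      = ∑ s : S, g (f s) := by
    refine Finset.sum_congr rfl fun s _ => ?_
    simp [hg, key s]
  rw [h1, ← Finset.sum_image (f := g) (g := f) (fun a _ b _ h => hf h)]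
  refine (Finset.sum_subset (Finset.subset_univ _) ?_).symm
  intro t _ ht
  have : (fun ω => f (X ω)) ⁻¹' {t} = ∅ := by
    ext ω
    simp only [Set.mem_preimage, Set.mem_singleton_iff, Set.mem_empty_iff_false, iff_false]
    intro h
    exact ht (Finset.mem_image.mpr ⟨X ω, Finset.mem_univ _, h⟩)
  simp [hg, this]

lemma entropy_unique {Ω : Type*} [MeasurableSpace Ω] (P : Measure Ω)
    [IsProbabilityMeasure P] {S : Type*} [Fintype S] [Unique S] (X : Ω → S) :
    entropy P X = 0 := by
  have : ∀ s : S, X ⁻¹' {s} = Set.univ := by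
    intro s; ext ω; simp [Subsingleton.elim (X ω) s]
  simp [entropy, this]

lemma snoc_inj {T : Type*} (k : ℕ) :
    Function.Injective
      (fun y : Fin (k+1) → T => (y (Fin.last k), fun j : Fin k => y j.castSucc)) := by
  intro y z h
  simp only [Prod.mk.injEq] at h
  funext j
  induction j using Fin.lastCases with
  | last => exact h.1
  | cast j => exact congrFun h.2 j

set_option maxHeartbeats 2000000 in
/-- **Decomposition of directed information into multiinformations** (Section 3.4 of the
paper): `Σᵢ I(X^i ; Y_i | Y^{i-1}) = Σᵢ [ M(X^i, Y^i) − M(X^i, Y^{i-1}) ] − M(Y^n)`,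
where `X^i = (X_1, …, X_i)`, `Y^i = (Y_1, …, Y_i)` and conditioning on the empty vector
`Y^0` is vacuous.  Here `i : Fin n` represents the paper's index `i = i.val + 1`, so
`X^i` has length `i.val + 1` and `Y^{i-1}` has length `i.val`. -/
theorem directedInfo_eq_sum_multiInfo
    {Ω S T : Type*} [MeasurableSpace Ω] (P : Measure Ω) [IsProbabilityMeasure P]
    [Fintype S] [MeasurableSpace S] [MeasurableSingletonClass S]
    [Fintype T] [MeasurableSpace T] [MeasurableSingletonClass T]
    {n : ℕ} (X : Fin n → Ω → S) (Y : Fin n → Ω → T)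
    (hX : ∀ i, Measurable (X i)) (hY : ∀ i, Measurable (Y i)) :
    ∑ i : Fin n, condMutualInfo P
        (fun ω (j : Fin (i.val + 1)) => X (j.castLE i.isLt) ω)
        (Y i)
        (fun ω (j : Fin i.val) => Y (j.castLE i.isLt.le) ω)
      = (∑ i : Fin n,
            (multiInfo₂ P (fun j : Fin (i.val + 1) => X (j.castLE i.isLt))
                (fun j : Fin (i.val + 1) => Y (j.castLE i.isLt))
              - multiInfo₂ P (fun j : Fin (i.val + 1) => X (j.castLE i.isLt))
                (fun j : Fin i.val => Y (j.castLE i.isLt.le))))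
        - multiInfo P Y := by
  classical
  have hlast : ∀ i : Fin n, (Fin.last i.val).castLE i.isLt = i :=
    fun i => Fin.ext rfl
  have hcs : ∀ (i : Fin n) (j : Fin i.val),
      (j.castSucc).castLE i.isLt = j.castLE i.isLt.le :=
    fun i j => Fin.ext rfl
  -- telescoping function
  set F : ℕ → ℝ := fun k =>
    if h : k ≤ n then entropy P (fun ω (j : Fin k) => Y (j.castLE h) ω) else 0 with hF
  have hF1 : ∀ i : Fin n,
      entropy P (fun ω (j : Fin (i.val+1)) => Y (j.castLE i.isLt) ω) = F (i.val+1) := by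
    intro i; simp only [hF]; rw [dif_pos (show i.val+1 ≤ n from i.isLt)]
  have hF0 : ∀ i : Fin n,
      entropy P (fun ω (j : Fin i.val) => Y (j.castLE i.isLt.le) ω) = F i.val := by
    intro i; simp only [hF]; rw [dif_pos i.isLt.le]
  have hFzero : F 0 = 0 := by
    simp only [hF]; rw [dif_pos (Nat.zero_le n)]
    exact entropy_unique P _
  have hFn : F n = entropy P (fun ω (j : Fin n) => Y j ω) := by
    simp only [hF]; rw [dif_pos (le_refl n)]
    congr 1
  have htel : ∑ i : Fin n, (F (i.val+1) - F i.val) = F n := by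
    rw [Fin.sum_univ_eq_sum_range (fun k => F (k+1) - F k), Finset.sum_range_sub F n,
      hFzero, sub_zero]
  -- recoding identities
  have hE3 : ∀ i : Fin n,
      entropy P (fun ω => (Y i ω, fun j : Fin i.val => Y (j.castLE i.isLt.le) ω))
        = entropy P (fun ω (j : Fin (i.val+1)) => Y (j.castLE i.isLt) ω) := by
    intro i
    have heq : (fun ω => (Y i ω, fun j : Fin i.val => Y (j.castLE i.isLt.le) ω))
        = fun ω => (fun y : Fin (i.val+1) → T =>
            (y (Fin.last i.val), fun j : Fin i.val => y j.castSucc))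
          ((fun j : Fin (i.val+1) => Y (j.castLE i.isLt) ω)) := by
      funext ω
      simp only [hlast i, hcs i]
    exact (congrArg (entropy P) heq).trans
      (entropy_comp_inj P (fun ω (j : Fin (i.val+1)) => Y (j.castLE i.isLt) ω) _ (snoc_inj i.val))
  have hE2 : ∀ i : Fin n,
      entropy P (fun ω => ((fun j : Fin (i.val+1) => X (j.castLE i.isLt) ω), Y i ω,
          fun j : Fin i.val => Y (j.castLE i.isLt.le) ω))
        = entropy P (fun ω => ((fun j : Fin (i.val+1) => X (j.castLE i.isLt) ω),
            fun j : Fin (i.val+1) => Y (j.castLE i.isLt) ω)) := by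
    intro i
    have hfinj : Function.Injective
        (fun p : (Fin (i.val+1) → S) × (Fin (i.val+1) → T) =>
          (p.1, p.2 (Fin.last i.val), fun j : Fin i.val => p.2 j.castSucc)) := by
      intro p q h
      simp only [Prod.mk.injEq] at h
      exact Prod.ext h.1 (snoc_inj i.val (Prod.ext h.2.1 h.2.2 : _))
    have heq : (fun ω => ((fun j : Fin (i.val+1) => X (j.castLE i.isLt) ω), Y i ω,
          fun j : Fin i.val => Y (j.castLE i.isLt.le) ω))
        = fun ω => (fun p : (Fin (i.val+1) → S) × (Fin (i.val+1) → T) =>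
            (p.1, p.2 (Fin.last i.val), fun j : Fin i.val => p.2 j.castSucc))
          (((fun j : Fin (i.val+1) => X (j.castLE i.isLt) ω),
            fun j : Fin (i.val+1) => Y (j.castLE i.isLt) ω)) := by
      funext ω
      simp only [hlast i, hcs i]
    exact (congrArg (entropy P) heq).trans
      (entropy_comp_inj P (fun ω => ((fun j : Fin (i.val+1) => X (j.castLE i.isLt) ω),
        fun j : Fin (i.val+1) => Y (j.castLE i.isLt) ω)) _ hfinj)
  -- marginal sum split
  have hsy : ∀ i : Fin n, ∑ j : Fin (i.val+1), entropy P (Y (j.castLE i.isLt))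
      = (∑ j : Fin i.val, entropy P (Y (j.castLE i.isLt.le))) + entropy P (Y i) := by
    intro i
    rw [Fin.sum_univ_castSucc]
    simp only [hlast i, hcs i]
  -- per-term identity
  have main : ∀ i : Fin n, condMutualInfo P
        (fun ω (j : Fin (i.val + 1)) => X (j.castLE i.isLt) ω)
        (Y i)
        (fun ω (j : Fin i.val) => Y (j.castLE i.isLt.le) ω)
      = (multiInfo₂ P (fun j : Fin (i.val + 1) => X (j.castLE i.isLt))
            (fun j : Fin (i.val + 1) => Y (j.castLE i.isLt))
          - multiInfo₂ P (fun j : Fin (i.val + 1) => X (j.castLE i.isLt))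
            (fun j : Fin i.val => Y (j.castLE i.isLt.le)))
        - entropy P (Y i) + (F (i.val+1) - F i.val) := by
    intro i
    unfold condMutualInfo multiInfo₂
    rw [hE3 i, hE2 i, hF1 i, hF0 i, hsy i]
    ring
  rw [Finset.sum_congr rfl (fun i _ => main i)]
  rw [Finset.sum_add_distrib, Finset.sum_sub_distrib, htel, hFn]
  unfold multiInfo
  ring
end
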